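/- arXiv:2211.10777 — 2 statements merged into one kernel-verified Lean document; each statement's English description precedes it below -/
import Mathlib

section
/- Let N, d ≥ 1 and 0 < μ ≤ L. Let 𝐋 be a symmetric positive semidefinite N×N real matrix with 𝐋·𝟏_N = 0, let ρ₂ > 0 satisfy vᵀ𝐋v ≥ ρ₂‖v‖² for every v ∈ ℝ^N orthogonal to 𝟏_N, and set 𝐋̂ = 𝐋 ⊗ I_d. Let f : ℝ^{Nd} → ℝ be twice continuously differentiable with μ·I ⪯ ∇²f(W) ⪯ L·I for all W. Fix w* ∈ ℝ^d, set W* = 𝟏_N ⊗ w*, and assume ⟨∇f(W*), 𝟏_N ⊗ u⟩ = 0 for every u ∈ ℝ^d and ‖∇f(W*)‖ ≤ √N·∇* for a constant ∇* ≥ 0. For c > 0 let Ŵ(c) denote the unique solution of ∇f(W) + c·𝐋̂·W = 0. Then for all 0 < c₁ ≤ c₂: ‖Ŵ(c₂) − Ŵ(c₁)‖ ≤ (1/c₁ − 1/c₂)·(√N·∇*·L/(μ·ρ₂))·(1 + (L²/(μ·ρ₂))·(1/c₁)). -/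
open Matrix
open scoped Kronecker RealInnerProductSpace


section Aux
variable {E : Type*} [NormedAddCommGroup E] [InnerProductSpace ℝ E] [CompleteSpace E]

lemma gradient_contDiff' (f : E → ℝ) (hf : ContDiff ℝ 2 f) : ContDiff ℝ 1 (gradient f) := by
  have h1 : ContDiff ℝ 1 (fderiv ℝ f) := hf.fderiv_right (by norm_num)
  exact (InnerProductSpace.toDual ℝ E).symm.contDiff.comp h1

lemma hess_symm' (f : E → ℝ) (hf : ContDiff ℝ 2 f) (W v w : E) :
    ⟪fderiv ℝ (gradient f) W v, w⟫ = ⟪fderiv ℝ (gradient f) W w, v⟫ := by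
  have hdf : Differentiable ℝ f := hf.differentiable (by norm_num)
  have h1 : ContDiff ℝ 1 (fderiv ℝ f) := hf.fderiv_right (by norm_num)
  have hdF : Differentiable ℝ (fderiv ℝ f) := h1.differentiable (by norm_num)
  have hdG : Differentiable ℝ (gradient f) :=
    (gradient_contDiff' f hf).differentiable (by norm_num)
  set F'' := fderiv ℝ (fderiv ℝ f) W with hF''def
  have hsym : ∀ v w, F'' v w = F'' w v :=
    second_derivative_symmetric (fun y => (hdf y).hasFDerivAt) (hdF W).hasFDerivAt
  -- key : for any z, the function x ↦ ⟪z, gradient f x⟫ equals x ↦ fderiv f x z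
  have key : ∀ (z x : E), ⟪gradient f x, z⟫ = fderiv ℝ f x z := by
    intro z x
    exact InnerProductSpace.toDual_symm_apply
  have main : ∀ z u : E, ⟪fderiv ℝ (gradient f) W u, z⟫ = F'' u z := by
    intro z u
    have h2 : HasFDerivAt (fun x => ⟪z, gradient f x⟫)
        ((innerSL ℝ z).comp (fderiv ℝ (gradient f) W)) W :=
      ((innerSL ℝ z).hasFDerivAt).comp W (hdG W).hasFDerivAt
    have h3 : HasFDerivAt (fun x => fderiv ℝ f x z)
        ((ContinuousLinearMap.apply ℝ ℝ z).comp F'') W :=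
      ((ContinuousLinearMap.apply ℝ ℝ z).hasFDerivAt).comp W (hdF W).hasFDerivAt
    have h4 : HasFDerivAt (fun x => ⟪z, gradient f x⟫)
        ((ContinuousLinearMap.apply ℝ ℝ z).comp F'') W := by
      apply h3.congr_of_eventuallyEq
      filter_upwards with x
      rw [real_inner_comm, key z x]
    have huniq := h2.unique h4
    have h5 := congrFun (congrArg (fun (T : E →L[ℝ] ℝ) => (T : E → ℝ)) huniq) u
    simpa [real_inner_comm] using h5
  rw [main w v, main v w, hsym v w]

end Aux

section Aux2
variable {E : Type*} [NormedAddCommGroup E] [InnerProductSpace ℝ E] [CompleteSpace E]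

lemma grad_strong_mono' (f : E → ℝ) (hf : ContDiff ℝ 2 f) {μ : ℝ}
    (hlow : ∀ W v, μ * ‖v‖ ^ 2 ≤ ⟪fderiv ℝ (gradient f) W v, v⟫) (x y : E) :
    μ * ‖x - y‖ ^ 2 ≤ ⟪gradient f x - gradient f y, x - y⟫ := by
  have hdG : Differentiable ℝ (gradient f) :=
    (gradient_contDiff' f hf).differentiable (by norm_num)
  set Δ := x - y with hΔ
  set φ : ℝ → ℝ := fun t => ⟪gradient f (y + t • Δ), Δ⟫ - t * (μ * ‖Δ‖ ^ 2) with hφ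
  have hderiv : ∀ t : ℝ, HasDerivAt φ
      (⟪(fderiv ℝ (gradient f) (y + t • Δ)) Δ, Δ⟫ - μ * ‖Δ‖ ^ 2) t := by
    intro t
    have hγ : HasDerivAt (fun t : ℝ => y + t • Δ) Δ t := by
      simpa using ((hasDerivAt_id t).smul_const Δ).const_add y
    have hcomp : HasDerivAt (fun t : ℝ => gradient f (y + t • Δ))
        ((fderiv ℝ (gradient f) (y + t • Δ)) Δ) t :=
      by have := (hdG (y + t • Δ)).hasFDerivAt.comp_hasDerivAt t hγ; exact this
    have hinner : HasDerivAt (fun t : ℝ => ⟪gradient f (y + t • Δ), Δ⟫)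
        ⟪(fderiv ℝ (gradient f) (y + t • Δ)) Δ, Δ⟫ t := by
      simpa using (HasDerivAt.inner ℝ hcomp (hasDerivAt_const t Δ))
    have hlin : HasDerivAt (fun t : ℝ => t * (μ * ‖Δ‖ ^ 2)) (μ * ‖Δ‖ ^ 2) t := by
      simpa using (hasDerivAt_id t).mul_const (μ * ‖Δ‖ ^ 2)
    exact hinner.sub hlin
  have hmono : Monotone φ := by
    apply monotone_of_deriv_nonneg
    · intro t; exact (hderiv t).differentiableAt
    · intro t
      rw [(hderiv t).deriv]
      have := hlow (y + t • Δ) Δ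
      linarith
  have h01 := hmono (by norm_num : (0:ℝ) ≤ 1)
  have e0 : φ 0 = ⟪gradient f y, Δ⟫ := by simp [hφ]
  have e1 : φ 1 = ⟪gradient f x, Δ⟫ - μ * ‖Δ‖ ^ 2 := by
    simp [hφ, hΔ]
  rw [e0, e1] at h01
  rw [inner_sub_left]
  linarith

lemma hess_bound' (f : E → ℝ) (hf : ContDiff ℝ 2 f) {μ L : ℝ} (hμ0 : 0 ≤ μ) (hL0 : 0 ≤ L)
    (hHess : ∀ W v, μ * ‖v‖ ^ 2 ≤ ⟪fderiv ℝ (gradient f) W v, v⟫ ∧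
      ⟪fderiv ℝ (gradient f) W v, v⟫ ≤ L * ‖v‖ ^ 2) (W : E) :
    ‖fderiv ℝ (gradient f) W‖ ≤ L := by
  set H := fderiv ℝ (gradient f) W with hH
  have hsym : ∀ v w, ⟪H v, w⟫ = ⟪H w, v⟫ := hess_symm' f hf W
  have hQ0 : ∀ v, (0:ℝ) ≤ ⟪H v, v⟫ := fun v =>
    le_trans (by positivity) (hHess W v).1
  have hQL : ∀ v, ⟪H v, v⟫ ≤ L * ‖v‖ ^ 2 := fun v => (hHess W v).2
  have key : ∀ v w : E, ⟪H v, w⟫ ≤ L * ‖v‖ * ‖w‖ := by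
    intro v w
    have hquad : ∀ t : ℝ, 0 ≤ ⟪H w, w⟫ * (t * t) + (2 * ⟪H v, w⟫) * t + ⟪H v, v⟫ := by
      intro t
      have h1 := hQ0 (v + t • w)
      have h2 : ⟪H (v + t • w), v + t • w⟫
          = ⟪H v, v⟫ + t * ⟪H v, w⟫ + t * ⟪H w, v⟫ + t * t * ⟪H w, w⟫ := by
        rw [_root_.map_add, _root_.map_smul]
        simp [inner_add_left, inner_add_right, inner_smul_left, inner_smul_right]
        ring
      rw [h2, hsym w v] at h1
      linarith
    have hdisc := discrim_le_zero hquad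
    rw [discrim] at hdisc
    have hBsq : ⟪H v, w⟫ ^ 2 ≤ ⟪H v, v⟫ * ⟪H w, w⟫ := by nlinarith [hdisc]
    have hprod : ⟪H v, v⟫ * ⟪H w, w⟫ ≤ (L * ‖v‖ * ‖w‖) ^ 2 := by
      have := hQL v; have := hQL w
      have := hQ0 v; have := hQ0 w
      nlinarith [norm_nonneg v, norm_nonneg w]
    nlinarith [hBsq, hprod, mul_nonneg (mul_nonneg hL0 (norm_nonneg v)) (norm_nonneg w)]
  apply ContinuousLinearMap.opNorm_le_bound _ hL0
  intro v
  rcases eq_or_lt_of_le (norm_nonneg (H v)) with h0 | h0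
  · rw [← h0]; positivity
  · have := key v (H v)
    have hinner : ⟪H v, H v⟫ = ‖H v‖ ^ 2 := real_inner_self_eq_norm_sq (H v)
    nlinarith [norm_nonneg v]

lemma grad_lip' (f : E → ℝ) (hf : ContDiff ℝ 2 f) {μ L : ℝ} (hμ0 : 0 ≤ μ) (hL0 : 0 ≤ L)
    (hHess : ∀ W v, μ * ‖v‖ ^ 2 ≤ ⟪fderiv ℝ (gradient f) W v, v⟫ ∧
      ⟪fderiv ℝ (gradient f) W v, v⟫ ≤ L * ‖v‖ ^ 2) (x y : E) :
    ‖gradient f x - gradient f y‖ ≤ L * ‖x - y‖ := by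
  have hdG : Differentiable ℝ (gradient f) :=
    (gradient_contDiff' f hf).differentiable (by norm_num)
  have := convex_univ (𝕜 := ℝ) (E := E) |>.norm_image_sub_le_of_norm_fderiv_le
    (f := gradient f) (fun z _ => (hdG z))
    (fun z _ => hess_bound' f hf hμ0 hL0 hHess z) (Set.mem_univ y) (Set.mem_univ x)
  simpa using this

end Aux2


section Mat
variable {N d : ℕ}

lemma K_apply (Lap : Matrix (Fin N) (Fin N) ℝ) (W : EuclideanSpace ℝ (Fin N × Fin d))
    (p : Fin N × Fin d) :
    Matrix.toEuclideanLin (Lap ⊗ₖ (1 : Matrix (Fin d) (Fin d) ℝ)) W p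
      = ∑ i, Lap p.1 i * W (i, p.2) := by
  rw [Matrix.toEuclideanLin_apply, PiLp.toLp_apply]
  simp only [Matrix.mulVec, dotProduct, Fintype.sum_prod_type,
    Matrix.kroneckerMap_apply, Matrix.one_apply, mul_ite, mul_one, mul_zero, ite_mul, zero_mul,
    Finset.sum_ite_eq, Finset.mem_univ, if_true]

lemma inner_eq_sum (x y : EuclideanSpace ℝ (Fin N × Fin d)) :
    ⟪x, y⟫ = ∑ p : Fin N × Fin d, x p * y p := by
  simp [PiLp.inner_apply, RCLike.inner_apply, conj_trivial]
  exact Finset.sum_congr rfl fun _ _ => mul_comm _ _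

end Mat

section Mat2
variable {N d : ℕ}

-- row sums vanish
lemma row_sum_zero (Lap : Matrix (Fin N) (Fin N) ℝ)
    (hL1 : Lap.mulVec (fun _ => 1) = 0) (i0 : Fin N) : ∑ i, Lap i0 i = 0 := by
  have := congrFun hL1 i0
  simpa [Matrix.mulVec, dotProduct] using this

lemma K_consensus (Lap : Matrix (Fin N) (Fin N) ℝ)
    (hL1 : Lap.mulVec (fun _ => 1) = 0) (u : EuclideanSpace ℝ (Fin d)) :
    Matrix.toEuclideanLin (Lap ⊗ₖ (1 : Matrix (Fin d) (Fin d) ℝ))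
      (WithLp.toLp 2 (fun p : Fin N × Fin d => u p.2) : EuclideanSpace ℝ (Fin N × Fin d)) = 0 := by
  ext p
  rw [K_apply]
  simp only [PiLp.toLp_apply, ← Finset.sum_mul]
  rw [row_sum_zero Lap hL1 p.1]
  simp

lemma K_herm (Lap : Matrix (Fin N) (Fin N) ℝ) (hLsym : Lap.IsSymm) :
    (Matrix.toEuclideanLin (Lap ⊗ₖ (1 : Matrix (Fin d) (Fin d) ℝ))
      : EuclideanSpace ℝ (Fin N × Fin d) →ₗ[ℝ] EuclideanSpace ℝ (Fin N × Fin d)).IsSymmetric := by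
  rw [← Matrix.isHermitian_iff_isSymmetric]
  rw [Matrix.IsHermitian]
  ext p q
  simp only [Matrix.conjTranspose_apply, Matrix.kroneckerMap_apply, star_trivial]
  rw [hLsym.apply, Matrix.one_apply, Matrix.one_apply]
  by_cases h : q.2 = p.2
  · simp [h]
  · rw [if_neg h, if_neg (fun hh => h (hh.symm))]

lemma K_inner_consensus (Lap : Matrix (Fin N) (Fin N) ℝ) (hLsym : Lap.IsSymm)
    (hL1 : Lap.mulVec (fun _ => 1) = 0)
    (W : EuclideanSpace ℝ (Fin N × Fin d)) (u : EuclideanSpace ℝ (Fin d)) :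
    ⟪Matrix.toEuclideanLin (Lap ⊗ₖ (1 : Matrix (Fin d) (Fin d) ℝ)) W,
      (WithLp.toLp 2 (fun p : Fin N × Fin d => u p.2) : EuclideanSpace ℝ (Fin N × Fin d))⟫ = 0 := by
  rw [K_herm Lap hLsym W, K_consensus Lap hL1 u]
  simp

lemma K_quad_lb (Lap : Matrix (Fin N) (Fin N) ℝ) {ρ₂ : ℝ}
    (hρ₂ : ∀ v : Fin N → ℝ, (∑ i, v i) = 0 → ρ₂ * (v ⬝ᵥ v) ≤ v ⬝ᵥ Lap.mulVec v)
    (v : EuclideanSpace ℝ (Fin N × Fin d)) (hv : ∀ j, ∑ i, v (i, j) = 0) :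
    ρ₂ * ‖v‖ ^ 2 ≤ ⟪Matrix.toEuclideanLin (Lap ⊗ₖ (1 : Matrix (Fin d) (Fin d) ℝ)) v, v⟫ := by
  have hnorm : ‖v‖ ^ 2 = ∑ j : Fin d, ((fun i => v (i, j)) ⬝ᵥ (fun i => v (i, j))) := by
    rw [← real_inner_self_eq_norm_sq, inner_eq_sum, Fintype.sum_prod_type_right]
    simp [dotProduct]
  have hq : ⟪Matrix.toEuclideanLin (Lap ⊗ₖ (1 : Matrix (Fin d) (Fin d) ℝ)) v, v⟫
      = ∑ j : Fin d, ((fun i => v (i, j)) ⬝ᵥ Lap.mulVec (fun i => v (i, j))) := by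
    rw [real_inner_comm, inner_eq_sum, Fintype.sum_prod_type_right]
    congr 1; ext j
    simp only [dotProduct, Matrix.mulVec, K_apply]
  rw [hnorm, hq, Finset.mul_sum]
  exact Finset.sum_le_sum fun j _ => hρ₂ _ (hv j)

end Mat2

section Perp
variable {N d : ℕ}

noncomputable def perpPart (N d : ℕ) (W : EuclideanSpace ℝ (Fin N × Fin d)) :
    EuclideanSpace ℝ (Fin N × Fin d) :=
  WithLp.toLp 2 (fun p => W p - (∑ i, W (i, p.2)) / N)

lemma perpPart_colsum (hN : 1 ≤ N) (W : EuclideanSpace ℝ (Fin N × Fin d)) (j : Fin d) :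
    ∑ i, perpPart N d W (i, j) = 0 := by
  have hNne : (N : ℝ) ≠ 0 := by positivity
  simp only [perpPart, PiLp.toLp_apply, Finset.sum_sub_distrib, Finset.sum_const, Finset.card_univ,
    Fintype.card_fin, nsmul_eq_mul]
  field_simp
  ring

lemma sub_perpPart (W : EuclideanSpace ℝ (Fin N × Fin d)) :
    W - perpPart N d W
      = (WithLp.toLp 2 (fun p : Fin N × Fin d => (WithLp.toLp 2 (fun j => (∑ i, W (i, j)) / N) : EuclideanSpace ℝ (Fin d)) p.2) : EuclideanSpace ℝ (Fin N × Fin d)) := by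
  ext p
  simp [perpPart, PiLp.sub_apply]

lemma inner_perpPart (X W : EuclideanSpace ℝ (Fin N × Fin d))
    (hX : ∀ u : EuclideanSpace ℝ (Fin d),
      ⟪X, (WithLp.toLp 2 (fun p : Fin N × Fin d => u p.2) : EuclideanSpace ℝ (Fin N × Fin d))⟫ = 0) :
    ⟪X, W⟫ = ⟪X, perpPart N d W⟫ := by
  have h1 : ⟪X, W - perpPart N d W⟫ = 0 := by
    rw [sub_perpPart]
    exact hX (WithLp.toLp 2 (fun j => (∑ i : Fin N, W (i, j)) / N) : EuclideanSpace ℝ (Fin d))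
  rw [inner_sub_right] at h1
  linarith

lemma K_perpPart (Lap : Matrix (Fin N) (Fin N) ℝ)
    (hL1 : Lap.mulVec (fun _ => 1) = 0) (W : EuclideanSpace ℝ (Fin N × Fin d)) :
    Matrix.toEuclideanLin (Lap ⊗ₖ (1 : Matrix (Fin d) (Fin d) ℝ)) W
      = Matrix.toEuclideanLin (Lap ⊗ₖ (1 : Matrix (Fin d) (Fin d) ℝ)) (perpPart N d W) := by
  have h := map_sub (Matrix.toEuclideanLin (Lap ⊗ₖ (1 : Matrix (Fin d) (Fin d) ℝ)))
    W (perpPart N d W)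
  rw [sub_perpPart W] at h
  rw [K_consensus Lap hL1 (WithLp.toLp 2 (fun j => (∑ i : Fin N, W (i, j)) / N) : EuclideanSpace ℝ (Fin d))] at h
  exact sub_eq_zero.mp h.symm

end Perp


set_option maxHeartbeats 4000000 in
/-- **Tracking bound for the penalized minimizers** (Appendix B.III, Eqs. (45)–(47)
with Lemmas 4 and 5): if `Ŵ(c)` denotes the unique solution of
`∇f(W) + c·𝐋̂·W = 0`, then for `0 < c₁ ≤ c₂`,
`‖Ŵ(c₂) − Ŵ(c₁)‖ ≤ (1/c₁ − 1/c₂)·(√N∇*L/(μρ₂))·(1 + (L²/(μρ₂))·(1/c₁))`. -/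
theorem stmt14 {N d : ℕ} (hN : 1 ≤ N) (hd : 1 ≤ d)
    {μ L ρ₂ gstar : ℝ} (hμ : 0 < μ) (hμL : μ ≤ L) (hρ : 0 < ρ₂) (hgstar : 0 ≤ gstar)
    (Lap : Matrix (Fin N) (Fin N) ℝ)
    (hLsym : Lap.IsSymm) (hLpsd : Lap.PosSemidef)
    (hL1 : Lap.mulVec (fun _ => 1) = 0)
    (hρ₂ : ∀ v : Fin N → ℝ, (∑ i, v i) = 0 → ρ₂ * (v ⬝ᵥ v) ≤ v ⬝ᵥ Lap.mulVec v)
    (f : EuclideanSpace ℝ (Fin N × Fin d) → ℝ) (hf : ContDiff ℝ 2 f)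
    (hHess : ∀ W v, μ * ‖v‖ ^ 2 ≤ ⟪fderiv ℝ (gradient f) W v, v⟫ ∧
      ⟪fderiv ℝ (gradient f) W v, v⟫ ≤ L * ‖v‖ ^ 2)
    (wstar : EuclideanSpace ℝ (Fin d))
    (Wstar : EuclideanSpace ℝ (Fin N × Fin d)) (hWstar : ∀ p, Wstar p = wstar p.2)
    (horth : ∀ u : EuclideanSpace ℝ (Fin d),
      ⟪gradient f Wstar, (WithLp.toLp 2 (fun p : Fin N × Fin d => u p.2) : EuclideanSpace ℝ (Fin N × Fin d))⟫ = 0)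
    (hgrad : ‖gradient f Wstar‖ ≤ Real.sqrt N * gstar)
    (What : ℝ → EuclideanSpace ℝ (Fin N × Fin d))
    (hWhat : ∀ c, 0 < c → gradient f (What c)
        + c • Matrix.toEuclideanLin (Lap ⊗ₖ (1 : Matrix (Fin d) (Fin d) ℝ)) (What c) = 0)
    (hWhatuniq : ∀ c, 0 < c → ∀ W, gradient f W
        + c • Matrix.toEuclideanLin (Lap ⊗ₖ (1 : Matrix (Fin d) (Fin d) ℝ)) W = 0 →
      W = What c) :
    ∀ c₁ c₂ : ℝ, 0 < c₁ → c₁ ≤ c₂ →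
      ‖What c₂ - What c₁‖
        ≤ (1 / c₁ - 1 / c₂) * (Real.sqrt N * gstar * L / (μ * ρ₂))
            * (1 + (L ^ 2 / (μ * ρ₂)) * (1 / c₁)) := by
  intro c₁ c₂ hc1 hc12
  have hc2 : 0 < c₂ := lt_of_lt_of_le hc1 hc12
  have hL0 : 0 ≤ L := le_trans hμ.le hμL
  have hEa := hWhat c₂ hc2
  have hEb := hWhat c₁ hc1
  set K := Matrix.toEuclideanLin (Lap ⊗ₖ (1 : Matrix (Fin d) (Fin d) ℝ)) with hKdef
  set Wa := What c₂ with hWadef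
  set Wb := What c₁ with hWbdef
  set S := Real.sqrt N * gstar with hSdef
  clear_value Wa Wb S
  have hS : 0 ≤ S := le_trans (norm_nonneg _) hgrad
  -- analytic facts
  have hmono : ∀ x y : EuclideanSpace ℝ (Fin N × Fin d),
      μ * ‖x - y‖ ^ 2 ≤ ⟪gradient f x - gradient f y, x - y⟫ :=
    grad_strong_mono' f hf (fun W v => (hHess W v).1)
  have hlip : ∀ x y : EuclideanSpace ℝ (Fin N × Fin d),
      ‖gradient f x - gradient f y‖ ≤ L * ‖x - y‖ :=
    grad_lip' f hf hμ.le hL0 hHess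
  -- orthogonality of gradients to the consensus subspace
  have hEa' : gradient f Wa = -(c₂ • K Wa) := by
    rw [eq_neg_iff_add_eq_zero]; exact hEa
  have hEb' : gradient f Wb = -(c₁ • K Wb) := by
    rw [eq_neg_iff_add_eq_zero]; exact hEb
  have horthA : ∀ u : EuclideanSpace ℝ (Fin d),
      ⟪gradient f Wa, (WithLp.toLp 2 (fun p : Fin N × Fin d => u p.2) : EuclideanSpace ℝ (Fin N × Fin d))⟫ = 0 := by
    intro u
    rw [hEa', inner_neg_left, real_inner_smul_left, K_inner_consensus Lap hLsym hL1]
    ring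
  have horthB : ∀ u : EuclideanSpace ℝ (Fin d),
      ⟪gradient f Wb, (WithLp.toLp 2 (fun p : Fin N × Fin d => u p.2) : EuclideanSpace ℝ (Fin N × Fin d))⟫ = 0 := by
    intro u
    rw [hEb', inner_neg_left, real_inner_smul_left, K_inner_consensus Lap hLsym hL1]
    ring
  -- quadratic lower bounds for K on any vector, through its perp part
  have hKquad : ∀ W : EuclideanSpace ℝ (Fin N × Fin d),
      ρ₂ * ‖perpPart N d W‖ ^ 2 ≤ ⟪K W, W⟫ := by
    intro W
    rw [hKdef, K_perpPart Lap hL1 W,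
      inner_perpPart _ _ (fun u => K_inner_consensus Lap hLsym hL1 _ u)]
    exact K_quad_lb Lap hρ₂ _ (perpPart_colsum hN W)
  ------------------------------------------------------------------
  -- Part 1 : bounds at Wa relative to Wstar
  ------------------------------------------------------------------
  set D := Wa - Wstar with hDdef
  set Dp := perpPart N d D with hDpdef
  clear_value D Dp
  have hWstarC : Wstar = (WithLp.toLp 2 (fun p : Fin N × Fin d => wstar p.2) : EuclideanSpace ℝ (Fin N × Fin d)) := by
    ext p; exact hWstar p
  have hKWstar : K Wstar = 0 := by
    rw [hKdef, hWstarC]; exact K_consensus Lap hL1 wstar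
  have hKD : K Wa = K D := by
    rw [hDdef, map_sub, hKWstar, sub_zero]
  -- inner the equation at Wa with D
  have key1 : ⟪gradient f Wa, D⟫ + c₂ * ⟪K D, D⟫ = 0 := by
    have h : ⟪gradient f Wa + c₂ • K Wa, D⟫ = ⟪(0 : EuclideanSpace ℝ (Fin N × Fin d)), D⟫ := by
      rw [hEa]
    rw [hKD] at h
    rwa [inner_add_left, real_inner_smul_left, inner_zero_left] at h
  have hGsD : -(S * ‖Dp‖) ≤ ⟪gradient f Wstar, D⟫ := by
    rw [inner_perpPart _ _ horth, ← hDpdef]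
    have h1 := abs_real_inner_le_norm (gradient f Wstar) Dp
    have h2 : ‖gradient f Wstar‖ * ‖Dp‖ ≤ S * ‖Dp‖ :=
      mul_le_mul_of_nonneg_right hgrad (norm_nonneg _)
    have h3 := neg_abs_le ⟪gradient f Wstar, Dp⟫
    linarith
  have hmonoD : μ * ‖D‖ ^ 2 ≤ ⟪gradient f Wa - gradient f Wstar, D⟫ := by
    rw [hDdef]; exact hmono Wa Wstar
  have hsplit : ⟪gradient f Wa, D⟫
      = ⟪gradient f Wstar, D⟫ + ⟪gradient f Wa - gradient f Wstar, D⟫ := by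
    rw [inner_sub_left]; ring
  have main1 : μ * ‖D‖ ^ 2 + c₂ * (ρ₂ * ‖Dp‖ ^ 2) ≤ S * ‖Dp‖ := by
    have hq := hKquad D
    rw [← hDpdef] at hq
    have hq2 : c₂ * (ρ₂ * ‖Dp‖ ^ 2) ≤ c₂ * ⟪K D, D⟫ :=
      mul_le_mul_of_nonneg_left hq hc2.le
    linarith [key1, hGsD, hmonoD, hsplit]
  have hDp_le : ‖Dp‖ ≤ S * (1 / c₂) / ρ₂ := by
    have heq : S * (1 / c₂) / ρ₂ = S / (c₂ * ρ₂) := by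
      field_simp
    rw [heq, le_div_iff₀ (by positivity : (0:ℝ) < c₂ * ρ₂)]
    rcases eq_or_lt_of_le (norm_nonneg Dp) with h0 | h0
    · rw [← h0]; simpa using hS
    · nlinarith [main1, sq_nonneg ‖D‖, mul_pos hc2 hρ]
  -- μ ‖D‖ ≤ L ‖Dp‖
  have horthdiffD : ∀ u : EuclideanSpace ℝ (Fin d),
      ⟪gradient f Wa - gradient f Wstar,
        (WithLp.toLp 2 (fun p : Fin N × Fin d => u p.2) : EuclideanSpace ℝ (Fin N × Fin d))⟫ = 0 := by
    intro u; rw [inner_sub_left, horthA u, horth u]; ring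
  have hlipD : ‖gradient f Wa - gradient f Wstar‖ ≤ L * ‖D‖ := by
    rw [hDdef]; exact hlip Wa Wstar
  have hDn_le : μ * ‖D‖ ≤ L * ‖Dp‖ := by
    have h1 : ⟪gradient f Wa - gradient f Wstar, D⟫
        = ⟪gradient f Wa - gradient f Wstar, Dp⟫ := by
      rw [inner_perpPart _ _ horthdiffD, hDpdef]
    have h2 := real_inner_le_norm (gradient f Wa - gradient f Wstar) Dp
    rcases eq_or_lt_of_le (norm_nonneg D) with h0 | h0
    · rw [← h0]; nlinarith [norm_nonneg Dp]
    · nlinarith [hmonoD, hlipD, norm_nonneg Dp]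
  have hGa_le : ‖gradient f Wa‖ ≤ S + L * ‖D‖ := by
    have h1 : gradient f Wa = gradient f Wstar + (gradient f Wa - gradient f Wstar) := by
      abel
    have h2 : ‖gradient f Wa‖ ≤ ‖gradient f Wstar‖ + ‖gradient f Wa - gradient f Wstar‖ := by
      nth_rewrite 1 [h1]
      exact norm_add_le _ _
    linarith [hgrad, hlipD]
  -- the uniform bound on ‖∇f(Wa)‖
  have hGaB : ‖gradient f Wa‖ ≤ S * (1 + (L ^ 2 / (μ * ρ₂)) * (1 / c₁)) := by
    have hD_le : ‖D‖ ≤ L * (S * (1 / c₂) / ρ₂) / μ := by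
      rw [le_div_iff₀ hμ]
      calc ‖D‖ * μ = μ * ‖D‖ := by ring
        _ ≤ L * ‖Dp‖ := hDn_le
        _ ≤ L * (S * (1 / c₂) / ρ₂) := by
            exact mul_le_mul_of_nonneg_left hDp_le hL0
    have ht : 1 / c₂ ≤ 1 / c₁ := one_div_le_one_div_of_le hc1 hc12
    have h2 : L * ‖D‖ ≤ L * (L * (S * (1 / c₂) / ρ₂) / μ) :=
      mul_le_mul_of_nonneg_left hD_le hL0
    have h3 : L * (L * (S * (1 / c₂) / ρ₂) / μ) ≤ L * (L * (S * (1 / c₁) / ρ₂) / μ) := by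
      gcongr
    have h4 : S + L * (L * (S * (1 / c₁) / ρ₂) / μ)
        = S * (1 + (L ^ 2 / (μ * ρ₂)) * (1 / c₁)) := by
      field_simp
    linarith [hGa_le]
  ------------------------------------------------------------------
  -- Part 2 : the two penalized minimizers
  ------------------------------------------------------------------
  set Δ := Wb - Wa with hΔdef
  set Δp := perpPart N d Δ with hΔpdef
  clear_value Δ Δp
  have e1 : (1 / c₁) • gradient f Wb + K Wb = 0 := by
    have h := congrArg (fun z => (1 / c₁) • z) hEb
    simpa [smul_add, smul_smul, one_div, inv_mul_cancel₀ hc1.ne', smul_zero] using h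
  have e2 : (1 / c₂) • gradient f Wa + K Wa = 0 := by
    have h := congrArg (fun z => (1 / c₂) • z) hEa
    simpa [smul_add, smul_smul, one_div, inv_mul_cancel₀ hc2.ne', smul_zero] using h
  have hvec : (1 / c₁) • (gradient f Wb - gradient f Wa) + K Δ
      + (1 / c₁ - 1 / c₂) • gradient f Wa = 0 := by
    have hrearr : (1 / c₁) • (gradient f Wb - gradient f Wa) + K Δ
        + (1 / c₁ - 1 / c₂) • gradient f Wa
        = ((1 / c₁) • gradient f Wb + K Wb) - ((1 / c₂) • gradient f Wa + K Wa) := by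
      rw [hΔdef, map_sub]
      module
    rw [hrearr, e1, e2, sub_zero]
  have key2 : (1 / c₁) * ⟪gradient f Wb - gradient f Wa, Δ⟫ + ⟪K Δ, Δ⟫
      + (1 / c₁ - 1 / c₂) * ⟪gradient f Wa, Δ⟫ = 0 := by
    have h : ⟪(1 / c₁) • (gradient f Wb - gradient f Wa) + K Δ
        + (1 / c₁ - 1 / c₂) • gradient f Wa, Δ⟫
        = ⟪(0 : EuclideanSpace ℝ (Fin N × Fin d)), Δ⟫ := by
      rw [hvec]
    rwa [inner_add_left, inner_add_left, real_inner_smul_left, real_inner_smul_left,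
      inner_zero_left] at h
  have hmonoΔ : μ * ‖Δ‖ ^ 2 ≤ ⟪gradient f Wb - gradient f Wa, Δ⟫ := by
    rw [hΔdef]; exact hmono Wb Wa
  have horthdiffΔ : ∀ u : EuclideanSpace ℝ (Fin d),
      ⟪gradient f Wb - gradient f Wa,
        (WithLp.toLp 2 (fun p : Fin N × Fin d => u p.2) : EuclideanSpace ℝ (Fin N × Fin d))⟫ = 0 := by
    intro u; rw [inner_sub_left, horthA u, horthB u]; ring
  have hba : 0 ≤ 1 / c₁ - 1 / c₂ := by
    have := one_div_le_one_div_of_le hc1 hc12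
    linarith
  have hb0 : 0 < 1 / c₁ := by positivity
  -- bound ⟪∇f(Wa), Δ⟫ from below
  have hGaΔ : -(‖gradient f Wa‖ * ‖Δp‖) ≤ ⟪gradient f Wa, Δ⟫ := by
    rw [inner_perpPart _ _ horthA, ← hΔpdef]
    have h1 := abs_real_inner_le_norm (gradient f Wa) Δp
    have h3 := neg_abs_le ⟪gradient f Wa, Δp⟫
    linarith
  have main2 : ρ₂ * ‖Δp‖ ^ 2 ≤ (1 / c₁ - 1 / c₂) * (‖gradient f Wa‖ * ‖Δp‖) := by
    have hq := hKquad Δ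
    rw [← hΔpdef] at hq
    have h5 : (1 / c₁ - 1 / c₂) * ⟪gradient f Wa, Δ⟫
        ≥ (1 / c₁ - 1 / c₂) * (-(‖gradient f Wa‖ * ‖Δp‖)) :=
      mul_le_mul_of_nonneg_left hGaΔ hba
    have h6 : (0:ℝ) ≤ (1 / c₁) * ⟪gradient f Wb - gradient f Wa, Δ⟫ := by
      have h7 : (0:ℝ) ≤ ⟪gradient f Wb - gradient f Wa, Δ⟫ :=
        le_trans (by positivity) hmonoΔ
      exact mul_nonneg hb0.le h7
    nlinarith [key2, hq]
  have hΔp_le : ‖Δp‖ ≤ (1 / c₁ - 1 / c₂) * ‖gradient f Wa‖ / ρ₂ := by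
    rcases eq_or_lt_of_le (norm_nonneg Δp) with h0 | h0
    · rw [← h0]; positivity
    · rw [le_div_iff₀ hρ]
      nlinarith [main2]
  have hΔn_le : μ * ‖Δ‖ ≤ L * ‖Δp‖ := by
    have h1 : ⟪gradient f Wb - gradient f Wa, Δ⟫
        = ⟪gradient f Wb - gradient f Wa, Δp⟫ := by
      rw [inner_perpPart _ _ horthdiffΔ, hΔpdef]
    have h2 := real_inner_le_norm (gradient f Wb - gradient f Wa) Δp
    have hlipΔ : ‖gradient f Wb - gradient f Wa‖ ≤ L * ‖Δ‖ := by
      rw [hΔdef]; exact hlip Wb Wa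
    rcases eq_or_lt_of_le (norm_nonneg Δ) with h0 | h0
    · rw [← h0]; nlinarith [norm_nonneg Δp]
    · nlinarith [hmonoΔ, norm_nonneg Δp]
  ------------------------------------------------------------------
  -- final combination
  ------------------------------------------------------------------
  have hgoalnorm : ‖Wa - Wb‖ = ‖Δ‖ := by
    rw [hΔdef, norm_sub_rev]
  rw [hgoalnorm]
  have step1 : ‖Δ‖ ≤ L * ‖Δp‖ / μ := by
    rw [le_div_iff₀ hμ]; linarith [hΔn_le]
  have step2 : ‖Δp‖ ≤ (1 / c₁ - 1 / c₂) * (S * (1 + (L ^ 2 / (μ * ρ₂)) * (1 / c₁))) / ρ₂ := by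
    calc ‖Δp‖ ≤ (1 / c₁ - 1 / c₂) * ‖gradient f Wa‖ / ρ₂ := hΔp_le
      _ ≤ (1 / c₁ - 1 / c₂) * (S * (1 + (L ^ 2 / (μ * ρ₂)) * (1 / c₁))) / ρ₂ := by
          gcongr
  calc ‖Δ‖ ≤ L * ‖Δp‖ / μ := step1
    _ ≤ L * ((1 / c₁ - 1 / c₂) * (S * (1 + (L ^ 2 / (μ * ρ₂)) * (1 / c₁))) / ρ₂) / μ := by
        gcongr
    _ = (1 / c₁ - 1 / c₂) * (S * L / (μ * ρ₂))
          * (1 + (L ^ 2 / (μ * ρ₂)) * (1 / c₁)) := by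
        field_simp
end

section
/- Let μ, η₀ > 0, let 0 < δ ≤ (4/5)·μ·η₀, let κ̄ ≥ 0 be an integer with μ·η₀/(1 + δκ̄) ≤ 1, let n ≥ 1 be an integer, and let υ be a real number with 1 ≤ υ ≤ (5/4)·n. Define η_j = η₀/(1 + δj) and P_{tk} = Π_{j=t+1}^{k−1}(1 − μη_j). Then for every integer k ≥ κ̄: Σ_{t=κ̄}^{k−1} P_{tk}^n·(1 + δt)^{−υ} ≤ (5·eⁿ/(4·μ·η₀))·(1 + δk)^{1−υ}. -/
lemma exp_pow_rpow (c β : ℝ) : (Real.exp c) ^ β = Real.exp (c * β) := by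
  rw [← Real.exp_one_rpow c, ← Real.rpow_mul (Real.exp_pos 1).le, Real.exp_one_rpow]

lemma key17 {μ η₀ δ υ : ℝ} {n : ℕ} (hμ : 0 < μ) (hη₀ : 0 < η₀) (hδ : 0 < δ)
    (hδle : δ ≤ (4/5) * μ * η₀) (hn : 1 ≤ n) (hυ1 : 1 ≤ υ) (hυ2 : υ ≤ (5/4) * n)
    {a : ℝ} (ha : 0 < a) (hxa : μ * η₀ ≤ a) :
    (1 - μ * (η₀ / a)) ^ n * ((5 * (Real.exp 1) ^ n / (4 * μ * η₀)) * a ^ (1 - υ))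
      + a ^ (-υ)
      ≤ (5 * (Real.exp 1) ^ n / (4 * μ * η₀)) * (a + δ) ^ (1 - υ) := by
  have hμη : 0 < μ * η₀ := mul_pos hμ hη₀
  set x : ℝ := μ * η₀ / a with hxdef
  have hx0 : 0 < x := div_pos hμη ha
  have hx1 : x ≤ 1 := (div_le_one ha).mpr hxa
  have hcx : μ * (η₀ / a) = x := by rw [hxdef, mul_div_assoc]
  have hb : 0 < a + δ := by linarith
  set β : ℝ := υ - 1 with hβdef
  have hβ : 0 ≤ β := by simp [hβdef]; linarith
  set E : ℝ := Real.exp 1 with hEdef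
  have hEn : (0:ℝ) < E ^ n := pow_pos (Real.exp_pos 1) n
  set C : ℝ := 5 * E ^ n / (4 * μ * η₀) with hCdef
  have hC : 0 < C := by
    apply div_pos (by positivity) (by positivity)
  have h1υ : (1:ℝ) - υ = -β := by ring
  have hυeq : -υ = -β + -1 := by ring
  rw [hcx, h1υ, hυeq, Real.rpow_add ha, Real.rpow_neg_one,
    Real.rpow_neg hb.le]
  rw [show C * ((a + δ) ^ β)⁻¹ = C / (a + δ) ^ β from (div_eq_mul_inv C _).symm,
    le_div_iff₀ (Real.rpow_pos_of_pos hb β)]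
  set R : ℝ := ((a + δ) / a) ^ β with hRdef
  have hR0 : 0 ≤ R := Real.rpow_nonneg (by positivity) β
  have hR1 : a ^ (-β) * (a + δ) ^ β = R := by
    rw [hRdef, Real.div_rpow hb.le ha.le, Real.rpow_neg ha.le, div_eq_mul_inv]
    ring
  have expand : ((1 - x) ^ n * (C * a ^ (-β)) + a ^ (-β) * a⁻¹) * (a + δ) ^ β
      = (1 - x) ^ n * C * R + R * a⁻¹ := by
    rw [← hR1]; ring
  rw [expand]
  -- bounds
  have hcn : (1 - x) ^ n ≤ Real.exp (-((n:ℝ) * x)) := by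
    have h1 : 1 - x ≤ Real.exp (-x) := by linarith [Real.add_one_le_exp (-x)]
    have h0 : 0 ≤ 1 - x := by linarith
    calc (1 - x) ^ n ≤ (Real.exp (-x)) ^ n := pow_le_pow_left₀ h0 h1 n
      _ = Real.exp ((n:ℝ) * (-x)) := (Real.exp_nat_mul _ n).symm
      _ = Real.exp (-((n:ℝ) * x)) := by ring_nf
  have hRle : R ≤ Real.exp (((n:ℝ) - 4/5) * x) := by
    have hda : δ / a ≤ (4/5) * x := by
      rw [hxdef, show (4:ℝ)/5 * (μ * η₀ / a) = (4/5 * μ * η₀) / a from by ring]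
      gcongr
    have hr : (a + δ) / a ≤ Real.exp ((4/5) * x) := by
      have : (a + δ) / a = 1 + δ / a := by field_simp
      rw [this]
      have := Real.add_one_le_exp ((4/5) * x)
      linarith
    calc R ≤ (Real.exp ((4/5) * x)) ^ β :=
          Real.rpow_le_rpow (by positivity) hr hβ
      _ = Real.exp ((4/5) * x * β) := exp_pow_rpow _ _
      _ ≤ Real.exp (((n:ℝ) - 4/5) * x) := by
          apply Real.exp_le_exp.mpr
          have hβn : β ≤ (5/4) * n - 1 := by rw [hβdef]; linarith
          nlinarith
  have hainv : a⁻¹ = x / (μ * η₀) := by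
    rw [hxdef]
    field_simp
  -- first term
  have hfirst : (1 - x) ^ n * C * R ≤ C * Real.exp (-(4/5) * x) := by
    calc (1 - x) ^ n * C * R
        ≤ Real.exp (-((n:ℝ) * x)) * C * Real.exp (((n:ℝ) - 4/5) * x) := by
          apply mul_le_mul (mul_le_mul_of_nonneg_right hcn hC.le) hRle hR0
          positivity
      _ = C * (Real.exp (-((n:ℝ) * x)) * Real.exp (((n:ℝ) - 4/5) * x)) := by ring
      _ = C * Real.exp (-(4/5) * x) := by rw [← Real.exp_add]; ring_nf
  -- second term
  have hsecond : R * a⁻¹ ≤ C * ((4/5) * x) * Real.exp (-(4/5) * x) := by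
    have hEn' : Real.exp (((n:ℝ) - 4/5) * x) ≤ E ^ n * Real.exp (-(4/5) * x) := by
      have : E ^ n * Real.exp (-(4/5) * x) = Real.exp ((n:ℝ) + -(4/5) * x) := by
        rw [Real.exp_add, hEdef, ← Real.exp_nat_mul]; ring_nf
      rw [this]
      apply Real.exp_le_exp.mpr
      nlinarith [(by exact_mod_cast hn : (1:ℝ) ≤ (n:ℝ))]
    have h2 : C * ((4/5) * x) = E ^ n * x / (μ * η₀) := by
      rw [hCdef]; field_simp
    calc R * a⁻¹ ≤ Real.exp (((n:ℝ) - 4/5) * x) * (x / (μ * η₀)) := by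
          rw [hainv]
          apply mul_le_mul_of_nonneg_right hRle (by positivity)
      _ ≤ (E ^ n * Real.exp (-(4/5) * x)) * (x / (μ * η₀)) := by
          apply mul_le_mul_of_nonneg_right hEn' (by positivity)
      _ = C * ((4/5) * x) * Real.exp (-(4/5) * x) := by rw [h2]; ring
  have hfin : (1 + (4/5) * x) * Real.exp (-(4/5) * x) ≤ 1 := by
    have h1 := Real.add_one_le_exp ((4/5) * x)
    have h2 : Real.exp (-(4/5) * x) = (Real.exp ((4/5) * x))⁻¹ := by
      rw [← Real.exp_neg]; ring_nf
    rw [h2, ← div_eq_mul_inv, div_le_one (Real.exp_pos _)]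
    linarith
  calc (1 - x) ^ n * C * R + R * a⁻¹
      ≤ C * Real.exp (-(4/5) * x) + C * ((4/5) * x) * Real.exp (-(4/5) * x) :=
        add_le_add hfirst hsecond
    _ = C * ((1 + (4/5) * x) * Real.exp (-(4/5) * x)) := by ring
    _ ≤ C * 1 := by apply mul_le_mul_of_nonneg_left hfin hC.le
    _ = C := mul_one C

/-- **Weighted-sum bound** (Eq. (55) in the proof of Theorem 2): with
`η_j = η₀/(1 + δj)`, `P_{tk} = Π_{j=t+1}^{k−1}(1 − μη_j)`, decay rate
`δ ≤ (4/5)μη₀`, `μη₀/(1 + δκ̄) ≤ 1`, `n ≥ 1` and `1 ≤ υ ≤ (5/4)n`, for every `k ≥ κ̄`: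
`Σ_{t=κ̄}^{k−1} P_{tk}ⁿ(1 + δt)^{−υ} ≤ (5eⁿ/(4μη₀))(1 + δk)^{1−υ}`. -/
theorem stmt17 {μ η₀ δ : ℝ} (hμ : 0 < μ) (hη₀ : 0 < η₀) (hδ : 0 < δ)
    (hδle : δ ≤ (4/5) * μ * η₀)
    (κ : ℕ) (hκ : μ * η₀ / (1 + δ * κ) ≤ 1)
    (n : ℕ) (hn : 1 ≤ n) (υ : ℝ) (hυ1 : 1 ≤ υ) (hυ2 : υ ≤ (5/4) * n) :
    ∀ k : ℕ, κ ≤ k →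
      ∑ t ∈ Finset.Ico κ k,
          (∏ j ∈ Finset.Ico (t+1) k, (1 - μ * (η₀ / (1 + δ * (j : ℝ))))) ^ n
            * (1 + δ * (t : ℝ)) ^ (-υ)
        ≤ (5 * (Real.exp 1) ^ n / (4 * μ * η₀)) * (1 + δ * (k : ℝ)) ^ (1 - υ) := by
  have hκpos : (0:ℝ) < 1 + δ * κ := by positivity
  have hμηκ : μ * η₀ ≤ 1 + δ * κ := (div_le_one hκpos).mp hκ
  intro k hk
  induction k, hk using Nat.le_induction with
  | base =>
    rw [Finset.Ico_self, Finset.sum_empty]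
    have h1 : (0:ℝ) < 1 + δ * κ := hκpos
    positivity
  | succ k hk ih =>
    have hak : (0:ℝ) < 1 + δ * k := by positivity
    have hμηk : μ * η₀ ≤ 1 + δ * k := by
      have : (κ:ℝ) ≤ k := Nat.cast_le.mpr hk
      nlinarith
    have hc0 : (0:ℝ) ≤ 1 - μ * (η₀ / (1 + δ * (k:ℝ))) := by
      rw [mul_div_assoc'] at *
      have := (div_le_one hak).mpr hμηk
      linarith
    -- split the sum
    have hsum : ∑ t ∈ Finset.Ico κ (k+1),
          (∏ j ∈ Finset.Ico (t+1) (k+1), (1 - μ * (η₀ / (1 + δ * (j : ℝ))))) ^ n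
            * (1 + δ * (t : ℝ)) ^ (-υ)
        = (1 - μ * (η₀ / (1 + δ * (k:ℝ)))) ^ n *
            ∑ t ∈ Finset.Ico κ k,
              (∏ j ∈ Finset.Ico (t+1) k, (1 - μ * (η₀ / (1 + δ * (j : ℝ))))) ^ n
                * (1 + δ * (t : ℝ)) ^ (-υ)
          + (1 + δ * (k:ℝ)) ^ (-υ) := by
      rw [Finset.sum_Ico_succ_top hk]
      rw [Finset.Ico_self, Finset.prod_empty, one_pow, one_mul]
      congr 1
      rw [Finset.mul_sum]
      apply Finset.sum_congr rfl
      intro t ht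
      have htk : t + 1 ≤ k := (Finset.mem_Ico.mp ht).2
      rw [Finset.prod_Ico_succ_top htk, mul_pow]
      ring
    rw [hsum]
    have step1 : (1 - μ * (η₀ / (1 + δ * (k:ℝ)))) ^ n *
            (∑ t ∈ Finset.Ico κ k,
              (∏ j ∈ Finset.Ico (t+1) k, (1 - μ * (η₀ / (1 + δ * (j : ℝ))))) ^ n
                * (1 + δ * (t : ℝ)) ^ (-υ))
          + (1 + δ * (k:ℝ)) ^ (-υ)
        ≤ (1 - μ * (η₀ / (1 + δ * (k:ℝ)))) ^ n *
            ((5 * (Real.exp 1) ^ n / (4 * μ * η₀)) * (1 + δ * (k:ℝ)) ^ (1 - υ))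
          + (1 + δ * (k:ℝ)) ^ (-υ) := by
      have := mul_le_mul_of_nonneg_left ih (pow_nonneg hc0 n)
      linarith
    refine step1.trans ?_
    have hcast : (1:ℝ) + δ * ((k:ℕ)+1 : ℕ) = (1 + δ * (k:ℝ)) + δ := by
      push_cast; ring
    rw [hcast]
    exact key17 hμ hη₀ hδ hδle hn hυ1 hυ2 hak hμηk
end
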